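/- arXiv:2310.09960 — 4 statements merged into one kernel-verified Lean document; each statement's English description precedes it below -/
import Mathlib

section
/- Let C(θ; d) = P_θ(D ≥ d) be the confidence distribution based on a continuous statistic D whose (1-α)-quantile q_α(θ) is strictly increasing and continuous in θ. Then C(·; d) has no point mass (i.e., lim_{θ→θ_L} C(θ; d) = 0 and lim_{θ→θ_U} C(θ; d) = 1 for all d in the interior of the sample space) if and only if for every α ∈ (0,1), q_α(θ) converges to the boundary of the sample space Ω_D as θ converges to the corresponding boundary of the parameter space Θ. -/
/-!
For each `θ`, strict monotonicity of `F θ` turns the defining equation `F θ (q α θ) = 1 - α` into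
the duality `q α θ < d ↔ C(θ; d) < α` (and `d < q α θ ↔ α < C(θ; d)`). Both convergence statements
are then unwound through the order topology: `C(θ; d) → 0` for every `d` says that `C(θ; d)`
eventually drops below every level `α`, i.e. every quantile eventually lies below every `d`,
i.e. the quantiles tend to `D_L`. The boundary at `θ_U` is the same argument in the order duals.
-/

open Set Filter Topology

theorem StrictMonoOn.lt_iff_one_sub_lt {f : ℝ → ℝ} {s : Set ℝ} (hf : StrictMonoOn f s)
    {x d α : ℝ} (hx : x ∈ s) (hd : d ∈ s) (hfx : f x = 1 - α) : x < d ↔ 1 - f d < α := by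
  rw [← hf.lt_iff_lt hx hd, hfx, sub_lt_comm]

theorem StrictMonoOn.lt_iff_lt_one_sub {f : ℝ → ℝ} {s : Set ℝ} (hf : StrictMonoOn f s)
    {x d α : ℝ} (hx : x ∈ s) (hd : d ∈ s) (hfx : f x = 1 - α) : d < x ↔ α < 1 - f d := by
  rw [← hf.lt_iff_lt hd hx, hfx, lt_sub_comm]

section QuantileDuality

variable {ι X Y : Type*} [LinearOrder X] [TopologicalSpace X] [OrderTopology X]
  [LinearOrder Y] [DenselyOrdered Y] [TopologicalSpace Y] [OrderTopology Y]
  {l : Filter ι} {C : ι → X → Y} {q : Y → ι → X} {Dl Du : X} {a b : Y}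

theorem forall_tendsto_lower_iff_of_lt_iff_lt (hab : a < b)
    (hq : ∀ α ∈ Ioo a b, ∀ᶠ θ in l, q α θ ∈ Ioo Dl Du)
    (hC : ∀ d ∈ Ioo Dl Du, ∀ᶠ θ in l, a ≤ C θ d)
    (hqC : ∀ α ∈ Ioo a b, ∀ d ∈ Ioo Dl Du, ∀ᶠ θ in l, (q α θ < d ↔ C θ d < α)) :
    (∀ d ∈ Ioo Dl Du, Tendsto (C · d) l (𝓝 a)) ↔
      ∀ α ∈ Ioo a b, Tendsto (q α) l (𝓝 Dl) := by
  refine ⟨fun hCa α hα => tendsto_order.2 ⟨fun c hc => ?_, fun c hc => ?_⟩,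
    fun hqDl d hd => tendsto_order.2 ⟨fun c hc => ?_, fun c hc => ?_⟩⟩
  · filter_upwards [hq α hα] with θ hθ using hc.trans hθ.1
  · rcases lt_or_ge c Du with hcDu | hDuc
    · filter_upwards [hqC α hα c ⟨hc, hcDu⟩, (hCa c ⟨hc, hcDu⟩).eventually_lt_const hα.1]
        with θ hqc hCc using hqc.2 hCc
    · filter_upwards [hq α hα] with θ hθ using hθ.2.trans_le hDuc
  · filter_upwards [hC d hd] with θ hθ using hc.trans_le hθ
  · obtain ⟨α, haα, hαcb⟩ := exists_between (lt_min hc hab)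
    obtain ⟨hαc, hαb⟩ := lt_min_iff.1 hαcb
    filter_upwards [hqC α ⟨haα, hαb⟩ d hd, (hqDl α ⟨haα, hαb⟩).eventually_lt_const hd.1]
      with θ hdual hqd using (hdual.1 hqd).trans hαc

theorem forall_tendsto_upper_iff_of_lt_iff_lt (hab : a < b)
    (hq : ∀ α ∈ Ioo a b, ∀ᶠ θ in l, q α θ ∈ Ioo Dl Du)
    (hC : ∀ d ∈ Ioo Dl Du, ∀ᶠ θ in l, C θ d ≤ b)
    (hqC : ∀ α ∈ Ioo a b, ∀ d ∈ Ioo Dl Du, ∀ᶠ θ in l, (d < q α θ ↔ α < C θ d)) :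
    (∀ d ∈ Ioo Dl Du, Tendsto (C · d) l (𝓝 b)) ↔
      ∀ α ∈ Ioo a b, Tendsto (q α) l (𝓝 Du) := by
  have h := forall_tendsto_lower_iff_of_lt_iff_lt (X := Xᵒᵈ) (Y := Yᵒᵈ)
    (Dl := OrderDual.toDual Du) (Du := OrderDual.toDual Dl) (a := OrderDual.toDual b)
    (b := OrderDual.toDual a) hab (fun α hα => (hq α hα.symm).mono fun _ h => h.symm)
    (fun d hd => hC d hd.symm) (fun α hα d hd => hqC α hα.symm d hd.symm)
  rwa [Ioo_toDual, Ioo_toDual] at h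

end QuantileDuality

theorem no_point_mass_iff_quantile_to_boundary_general
    (θl θu Dl Du : ℝ) (hΘ : θl < θu)
    (F : ℝ → ℝ → ℝ) (q : ℝ → ℝ → ℝ)
    (hFmono : ∀ θ ∈ Ioo θl θu, StrictMonoOn (F θ) (Ioo Dl Du))
    (hFrange : ∀ θ ∈ Ioo θl θu, ∀ d ∈ Ioo Dl Du, F θ d ∈ Icc (0 : ℝ) 1)
    (hq : ∀ α ∈ Ioo (0 : ℝ) 1, ∀ θ ∈ Ioo θl θu,
      q α θ ∈ Ioo Dl Du ∧ F θ (q α θ) = 1 - α) :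
    (∀ d ∈ Ioo Dl Du,
        Tendsto (fun θ => 1 - F θ d) (𝓝[>] θl) (𝓝 0) ∧
        Tendsto (fun θ => 1 - F θ d) (𝓝[<] θu) (𝓝 1)) ↔
      (∀ α ∈ Ioo (0 : ℝ) 1,
        Tendsto (q α) (𝓝[>] θl) (𝓝 Dl) ∧
        Tendsto (q α) (𝓝[<] θu) (𝓝 Du)) := by
  have hL : Ioo θl θu ∈ 𝓝[>] θl := Ioo_mem_nhdsGT hΘ
  have hU : Ioo θl θu ∈ 𝓝[<] θu := Ioo_mem_nhdsLT hΘ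
  rw [forall₂_and, forall₂_and]
  refine Iff.and
    (forall_tendsto_lower_iff_of_lt_iff_lt (C := fun θ d => 1 - F θ d)
      zero_lt_one (fun α hα => eventually_of_mem hL fun θ hθ => (hq α hα θ hθ).1)
      (fun d hd => eventually_of_mem hL fun θ hθ => sub_nonneg.2 (hFrange θ hθ d hd).2)
      (fun α hα d hd => eventually_of_mem hL fun θ hθ =>
        (hFmono θ hθ).lt_iff_one_sub_lt (hq α hα θ hθ).1 hd (hq α hα θ hθ).2))
    (forall_tendsto_upper_iff_of_lt_iff_lt (C := fun θ d => 1 - F θ d)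
      zero_lt_one (fun α hα => eventually_of_mem hU fun θ hθ => (hq α hα θ hθ).1)
      (fun d hd => eventually_of_mem hU fun θ hθ => sub_le_self 1 (hFrange θ hθ d hd).1)
      (fun α hα d hd => eventually_of_mem hU fun θ hθ =>
        (hFmono θ hθ).lt_iff_lt_one_sub (hq α hα θ hθ).1 hd (hq α hα θ hθ).2))

/-- Point-mass theorem (iff).  Let `C(θ; d) = 1 - F θ d` be the confidence
distribution based on a continuous statistic `D` with CDF `F θ`, strictly
increasing on the sample space `Ω_D = (Dl, Du)`, and `(1-α)`-quantile
`q α θ` (so `F θ (q α θ) = 1 - α`), continuous and strictly increasing in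
`θ ∈ Θ = (θl, θu)`.  Then `C(·; d)` has no point mass (its limits at the
parameter-space boundary are `0` and `1` for every interior `d`) if and only
if for every `α ∈ (0,1)` the quantile `q α θ` converges to the corresponding
boundary of the sample space as `θ` converges to the boundary of `Θ`. -/
theorem no_point_mass_iff_quantile_to_boundary
    (θl θu Dl Du : ℝ) (hΘ : θl < θu) (hΩ : Dl < Du)
    (F : ℝ → ℝ → ℝ) (q : ℝ → ℝ → ℝ)
    (hFmono : ∀ θ ∈ Ioo θl θu, StrictMonoOn (F θ) (Ioo Dl Du))
    (hFcont : ∀ θ ∈ Ioo θl θu, ContinuousOn (F θ) (Ioo Dl Du))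
    (hFrange : ∀ θ ∈ Ioo θl θu, ∀ d ∈ Ioo Dl Du, F θ d ∈ Icc (0 : ℝ) 1)
    (hq : ∀ α ∈ Ioo (0 : ℝ) 1, ∀ θ ∈ Ioo θl θu,
      q α θ ∈ Ioo Dl Du ∧ F θ (q α θ) = 1 - α)
    (hqmono : ∀ α ∈ Ioo (0 : ℝ) 1, StrictMonoOn (q α) (Ioo θl θu))
    (hqcont : ∀ α ∈ Ioo (0 : ℝ) 1, ContinuousOn (q α) (Ioo θl θu)) :
    (∀ d ∈ Ioo Dl Du,
        Tendsto (fun θ => 1 - F θ d) (𝓝[>] θl) (𝓝 0) ∧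
        Tendsto (fun θ => 1 - F θ d) (𝓝[<] θu) (𝓝 1)) ↔
      (∀ α ∈ Ioo (0 : ℝ) 1,
        Tendsto (q α) (𝓝[>] θl) (𝓝 Dl) ∧
        Tendsto (q α) (𝓝[<] θu) (𝓝 Du)) :=
  no_point_mass_iff_quantile_to_boundary_general θl θu Dl Du hΘ F q hFmono hFrange hq
end

section
/- (Forward direction of the point-mass theorem) If there exists α ∈ (0,1) with lim_{θ→θ_L} q_α(θ) > D_L, then there exists d* ∈ Ω_D such that lim_{θ→θ_L} C(θ; d*) ≥ α > 0; hence C has a point mass at the lower boundary. -/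
open Set Filter Topology

/- Below the limit `L` of the quantile (and above `Dl`) pick any `d*`; eventually `d* < q_α(θ)`,
and strict monotonicity of `F θ` gives `C(θ; d*) = 1 - F θ d* > 1 - F θ (q_α θ) = α`. -/

lemma eventually_lt_one_sub_of_eventually_lt_quantile {ι : Type*} {l : Filter ι} {S : Set ℝ}
    {F : ι → ℝ → ℝ} {q : ι → ℝ} {α d : ℝ}
    (hF : ∀ᶠ i in l, StrictMonoOn (F i) S ∧ q i ∈ S ∧ F i (q i) = 1 - α)
    (hd : d ∈ S) (hdq : ∀ᶠ i in l, d < q i) :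
    ∀ᶠ i in l, α < 1 - F i d := by
  filter_upwards [hF, hdq] with i ⟨hmono, hqS, hqF⟩ hlt
  linarith [hmono hd hqS hlt]

/-- Forward direction of the point-mass theorem: if for some `α ∈ (0,1)` the
quantile `q α θ` converges, as `θ → θl⁺`, to a limit `L > Dl` (it does not
reach the lower boundary of the sample space), then there is a point
`d* ∈ Ω_D` at which the confidence `C(θ; d*) = 1 - F θ d*` stays `≥ α > 0`
near `θl`, i.e. `lim_{θ→θl} C(θ; d*) ≥ α`: `C` has a point mass at the lower
boundary. -/
theorem point_mass_of_quantile_not_to_boundary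
    (θl θu Dl Du : ℝ) (hΘ : θl < θu) (hΩ : Dl < Du)
    (F : ℝ → ℝ → ℝ) (q : ℝ → ℝ → ℝ)
    (hFmono : ∀ θ ∈ Ioo θl θu, StrictMonoOn (F θ) (Ioo Dl Du))
    (α : ℝ) (hα : α ∈ Ioo (0 : ℝ) 1)
    (hq : ∀ θ ∈ Ioo θl θu, q α θ ∈ Ioo Dl Du ∧ F θ (q α θ) = 1 - α)
    (L : ℝ) (hL : Tendsto (q α) (𝓝[>] θl) (𝓝 L)) (hLgt : Dl < L) :
    ∃ dstar ∈ Ioo Dl Du,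
      (∀ᶠ θ in 𝓝[>] θl, α ≤ 1 - F θ dstar) ∧ 0 < α := by
  obtain ⟨d, hDl, hd⟩ := exists_between (lt_min hLgt hΩ)
  have hdΩ : d ∈ Ioo Dl Du := ⟨hDl, hd.trans_le (min_le_right _ _)⟩
  have hΘmem : ∀ᶠ θ in 𝓝[>] θl, θ ∈ Ioo θl θu := Ioo_mem_nhdsGT hΘ
  have hF : ∀ᶠ θ in 𝓝[>] θl,
      StrictMonoOn (F θ) (Ioo Dl Du) ∧ q α θ ∈ Ioo Dl Du ∧ F θ (q α θ) = 1 - α := by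
    filter_upwards [hΘmem] with θ hθ using ⟨hFmono θ hθ, hq θ hθ⟩
  have hdq : ∀ᶠ θ in 𝓝[>] θl, d < q α θ :=
    hL.eventually_const_lt (hd.trans_le (min_le_left _ _))
  refine ⟨d, hdΩ, ?_, hα.1⟩
  exact (eventually_lt_one_sub_of_eventually_lt_quantile hF hdΩ hdq).mono fun _ h => h.le
end

section
/- (Converse direction of the point-mass theorem) If for every α ∈ (0,1), q_α(θ) → D_L as θ → θ_L and q_α(θ) → D_U as θ → θ_U, then for every d in the interior of Ω_D, lim_{θ→θ_L} C(θ; d) = 0 and lim_{θ→θ_U} C(θ; d) = 1. -/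
open Set Filter Topology

/-! Once `q α θ` has crossed `d`, monotonicity of `F θ` squeezes `1 - F θ d` between `0` and `α`
near `θl` (between `α` and `1` near `θu`); since `α ∈ (0,1)` is arbitrary, the limits follow. -/

lemma tendsto_nhds_zero_of_eventually_le {β : Type*} {l : Filter β} {g : β → ℝ}
    (h0 : ∀ᶠ x in l, 0 ≤ g x) (hle : ∀ α ∈ Ioo (0 : ℝ) 1, ∀ᶠ x in l, g x ≤ α) :
    Tendsto g l (𝓝 0) := by
  refine tendsto_order.2 ⟨fun a ha => h0.mono fun x hx => ha.trans_le hx, fun a ha => ?_⟩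
  obtain ⟨α, hα0, hα⟩ := exists_between (lt_min ha one_pos)
  filter_upwards [hle α ⟨hα0, hα.trans_le (min_le_right _ _)⟩] with x hx
  exact hx.trans_lt (hα.trans_le (min_le_left _ _))

lemma tendsto_nhds_one_of_eventually_ge {β : Type*} {l : Filter β} {g : β → ℝ}
    (h1 : ∀ᶠ x in l, g x ≤ 1) (hge : ∀ α ∈ Ioo (0 : ℝ) 1, ∀ᶠ x in l, α ≤ g x) :
    Tendsto g l (𝓝 1) := by
  have h : Tendsto (fun x => 1 - g x) l (𝓝 0) := by
    refine tendsto_nhds_zero_of_eventually_le (h1.mono fun x hx => sub_nonneg.2 hx)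
      fun α hα => ?_
    filter_upwards [hge (1 - α) ⟨by linarith [hα.2], by linarith [hα.1]⟩] with x hx
    linarith
  simpa using h.const_sub 1

theorem no_point_mass_of_quantile_to_boundary_general
    (θl θu Dl Du : ℝ) (hΘ : θl < θu)
    (F : ℝ → ℝ → ℝ) (q : ℝ → ℝ → ℝ)
    (hFmono : ∀ θ ∈ Ioo θl θu, MonotoneOn (F θ) (Ioo Dl Du))
    (hFrange : ∀ θ ∈ Ioo θl θu, ∀ d ∈ Ioo Dl Du, F θ d ∈ Icc (0 : ℝ) 1)
    (hq : ∀ α ∈ Ioo (0 : ℝ) 1, ∀ θ ∈ Ioo θl θu,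
      q α θ ∈ Ioo Dl Du ∧ F θ (q α θ) = 1 - α)
    (hbdry : ∀ α ∈ Ioo (0 : ℝ) 1,
      Tendsto (q α) (𝓝[>] θl) (𝓝 Dl) ∧ Tendsto (q α) (𝓝[<] θu) (𝓝 Du)) :
    ∀ d ∈ Ioo Dl Du,
      Tendsto (fun θ => 1 - F θ d) (𝓝[>] θl) (𝓝 0) ∧
      Tendsto (fun θ => 1 - F θ d) (𝓝[<] θu) (𝓝 1) := by
  intro d hd
  have near_θl : ∀ᶠ θ in 𝓝[>] θl, θ ∈ Ioo θl θu := Ioo_mem_nhdsGT hΘ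
  have near_θu : ∀ᶠ θ in 𝓝[<] θu, θ ∈ Ioo θl θu := Ioo_mem_nhdsLT hΘ
  have tail_le : ∀ α ∈ Ioo (0 : ℝ) 1, ∀ θ ∈ Ioo θl θu, q α θ ≤ d → 1 - F θ d ≤ α :=
    fun α hα θ hθ hqd => by
      linarith [hFmono θ hθ (hq α hα θ hθ).1 hd hqd, (hq α hα θ hθ).2]
  have le_tail : ∀ α ∈ Ioo (0 : ℝ) 1, ∀ θ ∈ Ioo θl θu, d ≤ q α θ → α ≤ 1 - F θ d :=
    fun α hα θ hθ hdq => by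
      linarith [hFmono θ hθ hd (hq α hα θ hθ).1 hdq, (hq α hα θ hθ).2]
  constructor
  · refine tendsto_nhds_zero_of_eventually_le ?_ fun α hα => ?_
    · filter_upwards [near_θl] with θ hθ using sub_nonneg.2 (hFrange θ hθ d hd).2
    · filter_upwards [near_θl, (hbdry α hα).1 (Iio_mem_nhds hd.1)] with θ hθ hqd
      exact tail_le α hα θ hθ hqd.le
  · refine tendsto_nhds_one_of_eventually_ge ?_ fun α hα => ?_
    · filter_upwards [near_θu] with θ hθ using sub_le_self 1 (hFrange θ hθ d hd).1
    · filter_upwards [near_θu, (hbdry α hα).2 (Ioi_mem_nhds hd.2)] with θ hθ hdq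
      exact le_tail α hα θ hθ hdq.le

/-- Converse direction of the point-mass theorem: if for every `α ∈ (0,1)` the
quantile `q α θ` converges to the boundary of the sample space `Ω_D = (Dl, Du)`
as `θ` converges to the corresponding boundary of `Θ = (θl, θu)`, then for
every interior `d`, `C(θ; d) = 1 - F θ d` tends to `0` as `θ → θl⁺` and to `1`
as `θ → θu⁻`: no point mass. -/
theorem no_point_mass_of_quantile_to_boundary
    (θl θu Dl Du : ℝ) (hΘ : θl < θu) (hΩ : Dl < Du)
    (F : ℝ → ℝ → ℝ) (q : ℝ → ℝ → ℝ)
    (hFmono : ∀ θ ∈ Ioo θl θu, MonotoneOn (F θ) (Ioo Dl Du))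
    (hFrange : ∀ θ ∈ Ioo θl θu, ∀ d ∈ Ioo Dl Du, F θ d ∈ Icc (0 : ℝ) 1)
    (hq : ∀ α ∈ Ioo (0 : ℝ) 1, ∀ θ ∈ Ioo θl θu,
      q α θ ∈ Ioo Dl Du ∧ F θ (q α θ) = 1 - α)
    (hbdry : ∀ α ∈ Ioo (0 : ℝ) 1,
      Tendsto (q α) (𝓝[>] θl) (𝓝 Dl) ∧ Tendsto (q α) (𝓝[<] θu) (𝓝 Du)) :
    ∀ d ∈ Ioo Dl Du,
      Tendsto (fun θ => 1 - F θ d) (𝓝[>] θl) (𝓝 0) ∧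
      Tendsto (fun θ => 1 - F θ d) (𝓝[<] θu) (𝓝 1) :=
  no_point_mass_of_quantile_to_boundary_general θl θu Dl Du hΘ F q hFmono hFrange hq hbdry
end

section
/- In the satellite conjunction model, as σ → ∞ with fixed true θ₀, the point mass M(D) = 1 - Γ₂(D²/σ²; 0) converges in distribution to Uniform[0,1]; in particular, its expectation converges to 1/2, preventing dilution of confidence at {0}. -/
/-!
`Γ₂(x; ν)` is the Poisson(`ν/2`) mixture `∑ₖ pₖ Fₖ(x)` of the central χ² CDFs `Fₖ` with `2k + 2`
degrees of freedom, and `F₀(x) = 1 - e^{-x/2}`. Since every `Fₖ(x)` lies in `[0, 1]`, the mixture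
differs from `F₀(x)` by at most the Poisson mass off `0`, which is `1 - e^{-ν/2} ≤ ν/2`.
At `x = -2 log t` we get `F₀(x) = 1 - t`, so with `ν = θ₀²/σ²` both the CDF of `M(D)` and its mean
are uniformly within `θ₀²/(2σ²)` of those of `Uniform[0,1]`.
-/

open Set Filter Topology

/-- CDF of the noncentral chi-square distribution with 2 degrees of freedom and
noncentrality `ν`, evaluated at `x`. -/
noncomputable def Gamma2 (x ν : ℝ) : ℝ :=
  ∑' k : ℕ, Real.exp (-ν / 2) * (ν / 2) ^ k / (Nat.factorial k : ℝ) *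
    (1 - Real.exp (-x / 2) *
      ∑ j ∈ Finset.range (k + 1), (x / 2) ^ j / (Nat.factorial j : ℝ))

open MeasureTheory Real
open scoped Nat

noncomputable def poissonWeight (r : ℝ) (k : ℕ) : ℝ := exp (-r) * r ^ k / k !

/-- The CDF of the central χ² law with `2 (k + 1)` degrees of freedom. -/
noncomputable def chiSqCDF (k : ℕ) (x : ℝ) : ℝ :=
  1 - exp (-x / 2) * ∑ j ∈ Finset.range (k + 1), (x / 2) ^ j / j !

section Mixture

variable {w c : ℕ → ℝ}

lemma summable_mul_of_mem_Icc (hw : Summable w) (hw0 : ∀ k, 0 ≤ w k)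
    (hc : ∀ k, c k ∈ Icc (0 : ℝ) 1) : Summable fun k ↦ w k * c k :=
  hw.of_nonneg_of_le (fun k ↦ mul_nonneg (hw0 k) (hc k).1)
    fun k ↦ mul_le_of_le_one_right (hw0 k) (hc k).2

lemma tsum_mul_mem_Icc {a : ℝ} (hw : HasSum w a) (hw0 : ∀ k, 0 ≤ w k)
    (hc : ∀ k, c k ∈ Icc (0 : ℝ) 1) : ∑' k, w k * c k ∈ Icc 0 a :=
  ⟨tsum_nonneg fun k ↦ mul_nonneg (hw0 k) (hc k).1,
    hasSum_le (fun k ↦ mul_le_of_le_one_right (hw0 k) (hc k).2)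
      (summable_mul_of_mem_Icc hw.summable hw0 hc).hasSum hw⟩

lemma abs_tsum_mul_sub_le (hw : HasSum w 1) (hw0 : ∀ k, 0 ≤ w k)
    (hc : ∀ k, c k ∈ Icc (0 : ℝ) 1) : |∑' k, w k * c k - c 0| ≤ 1 - w 0 := by
  have htail : HasSum (fun k ↦ w (k + 1)) (1 - w 0) := by
    simpa using (hasSum_nat_add_iff' 1).mpr hw
  obtain ⟨hT0, hT1⟩ := tsum_mul_mem_Icc htail (fun k ↦ hw0 _) fun k ↦ hc _
  have hw1 : w 0 ≤ 1 := by simpa using hT0.trans hT1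
  rw [(summable_mul_of_mem_Icc hw.summable hw0 hc).tsum_eq_zero_add,
    show w 0 * c 0 + ∑' k, w (k + 1) * c (k + 1) - c 0
      = ∑' k, w (k + 1) * c (k + 1) - (1 - w 0) * c 0 by ring]
  exact abs_sub_le_of_nonneg_of_le hT0 hT1 (mul_nonneg (by linarith) (hc 0).1)
    (mul_le_of_le_one_right (by linarith) (hc 0).2)

end Mixture

lemma hasSum_poissonWeight (r : ℝ) : HasSum (poissonWeight r) 1 := by
  have h := (NormedSpace.expSeries_div_hasSum_exp r).mul_left (exp (-r))
  rw [← exp_eq_exp_ℝ, ← exp_add, neg_add_cancel, exp_zero] at h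
  exact h.congr_fun fun k ↦ mul_div_assoc _ _ _

lemma poissonWeight_nonneg {r : ℝ} (hr : 0 ≤ r) (k : ℕ) : 0 ≤ poissonWeight r k := by
  unfold poissonWeight; positivity

lemma chiSqCDF_zero (x : ℝ) : chiSqCDF 0 x = 1 - exp (-x / 2) := by
  simp [chiSqCDF]

lemma chiSqCDF_mem_Icc (k : ℕ) {x : ℝ} (hx : 0 ≤ x) : chiSqCDF k x ∈ Icc (0 : ℝ) 1 := by
  have hsum_nonneg : 0 ≤ ∑ j ∈ Finset.range (k + 1), (x / 2) ^ j / j ! := by positivity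
  have hsum_le : ∑ j ∈ Finset.range (k + 1), (x / 2) ^ j / j ! ≤ exp (x / 2) :=
    sum_le_exp_of_nonneg (by positivity) _
  have hexp : exp (-x / 2) * exp (x / 2) = 1 := by rw [← exp_add]; simp [neg_div]
  unfold chiSqCDF
  constructor <;> nlinarith [exp_pos (-x / 2)]

lemma Gamma2_eq_tsum (x ν : ℝ) :
    Gamma2 x ν = ∑' k, poissonWeight (ν / 2) k * chiSqCDF k x := by
  simp only [Gamma2, poissonWeight, chiSqCDF, neg_div]

lemma hasSum_Gamma2 {x ν : ℝ} (hx : 0 ≤ x) (hν : 0 ≤ ν) :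
    HasSum (fun k ↦ poissonWeight (ν / 2) k * chiSqCDF k x) (Gamma2 x ν) := by
  rw [Gamma2_eq_tsum]
  exact (summable_mul_of_mem_Icc (hasSum_poissonWeight _).summable
    (poissonWeight_nonneg (by positivity)) fun k ↦ chiSqCDF_mem_Icc k hx).hasSum

lemma Gamma2_mem_Icc {x ν : ℝ} (hx : 0 ≤ x) (hν : 0 ≤ ν) : Gamma2 x ν ∈ Icc (0 : ℝ) 1 := by
  rw [Gamma2_eq_tsum]
  exact tsum_mul_mem_Icc (hasSum_poissonWeight _) (poissonWeight_nonneg (by positivity))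
    fun k ↦ chiSqCDF_mem_Icc k hx

lemma abs_Gamma2_sub_le {x ν : ℝ} (hx : 0 ≤ x) (hν : 0 ≤ ν) :
    |Gamma2 x ν - (1 - exp (-x / 2))| ≤ ν / 2 := by
  have h := abs_tsum_mul_sub_le (hasSum_poissonWeight (ν / 2))
    (poissonWeight_nonneg (by positivity)) fun k ↦ chiSqCDF_mem_Icc k hx
  rw [← Gamma2_eq_tsum, chiSqCDF_zero] at h
  refine h.trans ?_
  simpa [poissonWeight] using add_one_le_exp (-(ν / 2))

lemma neg_two_mul_log_nonneg {t : ℝ} (ht : t ∈ Ioc 0 1) : 0 ≤ -2 * log t := by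
  linarith [log_nonpos ht.1.le ht.2]

lemma abs_Gamma2_neg_two_mul_log_sub_le {t ν : ℝ} (ht : t ∈ Ioc 0 1) (hν : 0 ≤ ν) :
    |Gamma2 (-2 * log t) ν - (1 - t)| ≤ ν / 2 := by
  simpa [exp_log ht.1] using abs_Gamma2_sub_le (neg_two_mul_log_nonneg ht) hν

lemma integrableOn_Gamma2_neg_two_mul_log {ν : ℝ} (hν : 0 ≤ ν) :
    IntegrableOn (fun t ↦ Gamma2 (-2 * log t) ν) (Ioo 0 1) := by
  have hx : ∀ t ∈ Ioo (0 : ℝ) 1, 0 ≤ -2 * log t := fun t ht ↦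
    neg_two_mul_log_nonneg (Ioo_subset_Ioc_self ht)
  have hmeas : AEStronglyMeasurable (fun t ↦ Gamma2 (-2 * log t) ν) (volume.restrict (Ioo 0 1)) :=
    aestronglyMeasurable_of_tendsto_ae atTop
      (f := fun n t ↦ ∑ k ∈ Finset.range n, poissonWeight (ν / 2) k * chiSqCDF k (-2 * log t))
      (fun n ↦ by unfold chiSqCDF; fun_prop)
      (ae_restrict_of_forall_mem measurableSet_Ioo fun t ht ↦
        (hasSum_Gamma2 (hx t ht) hν).tendsto_sum_nat)
  refine Integrable.of_bound hmeas 1 (ae_restrict_of_forall_mem measurableSet_Ioo fun t ht ↦ ?_)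
  have h := Gamma2_mem_Icc (hx t ht) hν
  exact (norm_of_nonneg h.1).trans_le h.2

lemma integral_Ioo_one_sub : ∫ t in Ioo (0 : ℝ) 1, (1 - t) = 1 / 2 := by
  rw [← integral_Ioc_eq_integral_Ioo, ← intervalIntegral.integral_of_le zero_le_one,
    intervalIntegral.integral_sub intervalIntegrable_const intervalIntegral.intervalIntegrable_id]
  norm_num [integral_id]

lemma abs_integral_Gamma2_neg_two_mul_log_sub_half_le {ν : ℝ} (hν : 0 ≤ ν) :
    |(∫ t in Ioo 0 1, Gamma2 (-2 * log t) ν) - 1 / 2| ≤ ν / 2 := by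
  have h1 : IntegrableOn (fun t : ℝ ↦ 1 - t) (Ioo 0 1) :=
    (continuous_const.sub continuous_id).integrableOn_Icc.mono_set Ioo_subset_Icc_self
  rw [← integral_Ioo_one_sub, ← integral_sub (integrableOn_Gamma2_neg_two_mul_log hν) h1]
  simpa using norm_setIntegral_le_of_norm_le_const
    (f := fun t ↦ Gamma2 (-2 * log t) ν - (1 - t)) (measure_Ioo_lt_top (μ := volume))
    fun t ht ↦ abs_Gamma2_neg_two_mul_log_sub_le (Ioo_subset_Ioc_self ht) hν

lemma tendsto_of_abs_sub_le {α : Type*} {l : Filter α} {f g : α → ℝ} {a : ℝ}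
    (h : ∀ x, |f x - a| ≤ g x) (hg : Tendsto g l (𝓝 0)) : Tendsto f l (𝓝 a) :=
  tendsto_iff_norm_sub_tendsto_zero.2 (squeeze_zero (fun _ ↦ norm_nonneg _) h hg)

/-- In the satellite conjunction model (`D²/σ² ~ χ²₂(θ₀²/σ²)`), as `σ → ∞`
with fixed true `θ₀`, the point mass `M(D) = 1 - Γ₂(D²/σ²; 0)` converges in
distribution to `Uniform[0,1]`, and its expectation converges to `1/2`.
Since `M(D) ≤ t ⟺ D²/σ² ≥ -2 log t`, the CDF of `M(D)` at `t ∈ (0,1)` is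
`1 - Γ₂(-2 log t; θ₀²/σ²)`, and `E[M(D)] = ∫₀¹ Γ₂(-2 log t; θ₀²/σ²) dt`. -/
theorem point_mass_tendsto_uniform (θ₀ : ℝ) :
    (∀ t ∈ Ioo (0 : ℝ) 1,
      Tendsto (fun σ : ℝ => 1 - Gamma2 (-2 * Real.log t) (θ₀ ^ 2 / σ ^ 2))
        atTop (𝓝 t)) ∧
    Tendsto
      (fun σ : ℝ => ∫ t in Ioo (0 : ℝ) 1, Gamma2 (-2 * Real.log t) (θ₀ ^ 2 / σ ^ 2))
      atTop (𝓝 (1 / 2)) := by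
  have hν : ∀ σ : ℝ, 0 ≤ θ₀ ^ 2 / σ ^ 2 := fun σ ↦ by positivity
  have hrate : Tendsto (fun σ : ℝ ↦ θ₀ ^ 2 / σ ^ 2 / 2) atTop (𝓝 0) := by
    simpa using ((tendsto_pow_atTop two_ne_zero).const_div_atTop (θ₀ ^ 2)).div_const 2
  refine ⟨fun t ht ↦ tendsto_of_abs_sub_le (fun σ ↦ ?_) hrate,
    tendsto_of_abs_sub_le (fun σ ↦ abs_integral_Gamma2_neg_two_mul_log_sub_half_le (hν σ)) hrate⟩
  rw [abs_sub_comm, show t - (1 - Gamma2 (-2 * log t) (θ₀ ^ 2 / σ ^ 2))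
    = Gamma2 (-2 * log t) (θ₀ ^ 2 / σ ^ 2) - (1 - t) by ring]
  exact abs_Gamma2_neg_two_mul_log_sub_le (Ioo_subset_Ioc_self ht) (hν σ)
end
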